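/- Let r₁,…,r_T be independent Gaussian random variables with r_t ~ N(0, m_t²), m_t > 0, and let v₁,…,v_T be fixed reals. Define σ² = Σ_t (v_t/m_t)² and s = ε − (1/2)Σ_t (v_t/m_t)² with s > 0. Then P(|Σ_t (2 r_t v_t + v_t²)/(2 m_t²)| > ε) ≤ (2σ/(s√(2π))) · exp(−s²/(2σ²)). -/

import Mathlib

/-!
The privacy loss equals `X + σ² / 2` with `X = ∑ t, (v t / m t ^ 2) * r t`, which is a centred
Gaussian of variance `σ²` because the characteristic functions of the independent coordinates
multiply. So the event lies in `{s < |X|}`, and each of the two tails of `X` is bounded by Mills'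
ratio: `∫ x in Ioi s, φ x ≤ ∫ x in Ioi s, (x / s) * φ x = σ² * φ s / s`, the last integrand having
the explicit antiderivative `-σ² * φ`.
-/

open MeasureTheory ProbabilityTheory Real Filter Set Topology
open scoped NNReal ENNReal

namespace ProbabilityTheory

section SumOfGaussians

variable {ι : Type*} [Fintype ι]

lemma map_sum_pi_gaussianReal (μ : ι → ℝ) (v : ι → ℝ≥0) :
    (Measure.pi fun i ↦ gaussianReal (μ i) (v i)).map (fun x ↦ ∑ i, x i) =
      gaussianReal (∑ i, μ i) (∑ i, v i) := by
  refine Measure.ext_of_charFun ?_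
  ext t
  simp only [charFun_map_sum_pi_eq_prod, Finset.prod_apply, charFun_gaussianReal,
    ← Complex.exp_sum]
  push_cast
  congr 1
  simp only [Finset.mul_sum, Finset.sum_mul, Finset.sum_div, ← Finset.sum_sub_distrib]

lemma map_sum_mul_pi_gaussianReal (a μ : ι → ℝ) (v : ι → ℝ≥0) :
    (Measure.pi fun i ↦ gaussianReal (μ i) (v i)).map (fun x ↦ ∑ i, a i * x i) =
      gaussianReal (∑ i, a i * μ i) (∑ i, ⟨a i ^ 2, sq_nonneg _⟩ * v i) := by
  have hscale : Measurable fun (x : ι → ℝ) i ↦ a i * x i := by fun_prop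
  rw [show (fun x : ι → ℝ ↦ ∑ i, a i * x i) = (fun y ↦ ∑ i, y i) ∘ fun x i ↦ a i * x i from rfl,
    ← Measure.map_map (by fun_prop) hscale, Measure.pi_map_pi (fun i ↦ by fun_prop)]
  simp only [gaussianReal_map_const_mul]
  exact map_sum_pi_gaussianReal _ _

end SumOfGaussians

section GaussianTail

variable {v : ℝ≥0} {s : ℝ}

lemma mul_gaussianPDFReal_zero (x : ℝ) :
    v * gaussianPDFReal 0 v x = √v / √(2 * π) * exp (-x ^ 2 / (2 * v)) := by
  rcases eq_or_ne v 0 with rfl | hv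
  · simp
  have hv' : (0 : ℝ) < v := by positivity
  simp only [gaussianPDFReal_def, sub_zero]
  rw [sqrt_mul (by positivity), ← mul_assoc]
  congr 1
  field_simp
  rw [sq_sqrt hv'.le]

lemma hasDerivAt_neg_mul_gaussianPDFReal_zero (hv : v ≠ 0) (x : ℝ) :
    HasDerivAt (fun y ↦ -(v * gaussianPDFReal 0 v y)) (x * gaussianPDFReal 0 v x) x := by
  have hv' : (0 : ℝ) < v := by positivity
  have hexp : HasDerivAt (fun y : ℝ ↦ -y ^ 2 / (2 * v)) (-(2 * x) / (2 * v)) x := by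
    simpa using (hasDerivAt_pow 2 x).neg.div_const (2 * (v : ℝ))
  have hpdf : (fun y ↦ -(v * gaussianPDFReal 0 v y)) =
      fun y ↦ -(v * (√(2 * π * v))⁻¹) * exp (-y ^ 2 / (2 * v)) := by
    ext y
    simp only [gaussianPDFReal_def, sub_zero]
    ring
  rw [hpdf]
  refine (hexp.exp.const_mul _).congr_deriv ?_
  simp only [gaussianPDFReal_def, sub_zero]
  field_simp

lemma tendsto_gaussianPDFReal_atTop (μ : ℝ) (v : ℝ≥0) :
    Tendsto (gaussianPDFReal μ v) atTop (𝓝 0) := by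
  rcases eq_or_ne v 0 with rfl | hv
  · simp [gaussianPDFReal_def]
  have hv' : (0 : ℝ) < v := by positivity
  have hexp : Tendsto (fun x ↦ -(x - μ) ^ 2 / (2 * v)) atTop atBot := by
    simp_rw [neg_div]
    exact tendsto_neg_atTop_atBot.comp (((tendsto_pow_atTop two_ne_zero).comp
      (tendsto_atTop_add_const_right _ (-μ) tendsto_id)).atTop_div_const (by positivity))
  rw [gaussianPDFReal_def]
  simpa only [mul_zero, Function.comp_def] using
    (tendsto_exp_atBot.comp hexp).const_mul (√(2 * π * v))⁻¹

lemma integrableOn_Ioi_mul_gaussianPDFReal_zero (hv : v ≠ 0) (hs : 0 ≤ s) :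
    IntegrableOn (fun x ↦ x * gaussianPDFReal 0 v x) (Ioi s) :=
  integrableOn_Ioi_deriv_of_nonneg' (fun x _ ↦ hasDerivAt_neg_mul_gaussianPDFReal_zero hv x)
    (fun _ hx ↦ mul_nonneg (hs.trans hx.out.le) (gaussianPDFReal_nonneg _ _ _))
    ((tendsto_gaussianPDFReal_atTop 0 v).const_mul (v : ℝ)).neg

lemma integral_Ioi_mul_gaussianPDFReal_zero (hv : v ≠ 0) (hs : 0 ≤ s) :
    ∫ x in Ioi s, x * gaussianPDFReal 0 v x = v * gaussianPDFReal 0 v s := by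
  rw [integral_Ioi_of_hasDerivAt_of_tendsto'
    (fun x _ ↦ hasDerivAt_neg_mul_gaussianPDFReal_zero hv x)
    (integrableOn_Ioi_mul_gaussianPDFReal_zero hv hs)
    ((tendsto_gaussianPDFReal_atTop 0 v).const_mul (v : ℝ)).neg]
  ring

lemma gaussianReal_Ioi_le (hs : 0 < s) :
    gaussianReal 0 v (Ioi s) ≤ ENNReal.ofReal (v * gaussianPDFReal 0 v s / s) := by
  rcases eq_or_ne v 0 with rfl | hv
  · simp [gaussianReal_zero_var, hs.le]
  rw [gaussianReal_apply_eq_integral _ hv, ← integral_Ioi_mul_gaussianPDFReal_zero hv hs.le,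
    ← integral_div]
  refine ENNReal.ofReal_le_ofReal <| setIntegral_mono_on
    (integrable_gaussianPDFReal 0 v).integrableOn
    ((integrableOn_Ioi_mul_gaussianPDFReal_zero hv hs.le).div_const s) measurableSet_Ioi
    fun x hx ↦ ?_
  rw [le_div_iff₀ hs, mul_comm]
  exact mul_le_mul_of_nonneg_right (le_of_lt hx) (gaussianPDFReal_nonneg _ _ _)

lemma gaussianReal_lt_abs_le (hs : 0 < s) :
    gaussianReal 0 v {x | s < |x|} ≤
      ENNReal.ofReal (2 * √v / (s * √(2 * π)) * exp (-s ^ 2 / (2 * v))) := by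
  have hset : {x | s < |x|} = (fun x ↦ -x) ⁻¹' Ioi s ∪ Ioi s := by
    ext x
    simp only [mem_ofPred_eq, lt_abs, mem_union, mem_preimage, mem_Ioi, or_comm]
  have hsymm : gaussianReal 0 v ((fun x ↦ -x) ⁻¹' Ioi s) = gaussianReal 0 v (Ioi s) := by
    rw [← Measure.map_apply measurable_neg measurableSet_Ioi, gaussianReal_map_neg, neg_zero]
  calc gaussianReal 0 v {x | s < |x|}
      ≤ gaussianReal 0 v ((fun x ↦ -x) ⁻¹' Ioi s) + gaussianReal 0 v (Ioi s) :=
        hset ▸ measure_union_le _ _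
    _ = 2 * gaussianReal 0 v (Ioi s) := by rw [hsymm, two_mul]
    _ ≤ 2 * ENNReal.ofReal (v * gaussianPDFReal 0 v s / s) := by
        gcongr
        exact gaussianReal_Ioi_le hs
    _ = _ := by
        rw [← ENNReal.ofReal_ofNat 2, ← ENNReal.ofReal_mul zero_le_two, mul_gaussianPDFReal_zero]
        ring_nf

end GaussianTail

end ProbabilityTheory

lemma sum_privacy_loss_eq {ι : Type*} [Fintype ι] (m v r : ι → ℝ) :
    ∑ t, (2 * r t * v t + v t ^ 2) / (2 * m t ^ 2) =
      ∑ t, v t / m t ^ 2 * r t + 1 / 2 * ∑ t, (v t / m t) ^ 2 := by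
  rw [Finset.mul_sum, ← Finset.sum_add_distrib]
  refine Finset.sum_congr rfl fun t _ ↦ ?_
  ring

lemma sq_div_sq_mul_sq (v m : ℝ) : (v / m ^ 2) ^ 2 * m ^ 2 = (v / m) ^ 2 := by
  rcases eq_or_ne m 0 with rfl | hm
  · simp
  field_simp

theorem privacy_loss_tail_bound_general (T : ℕ) (m v : Fin T → ℝ)
    (ε σ s : ℝ)
    (hσ : σ = Real.sqrt (∑ t, (v t / m t) ^ 2))
    (hs : s = ε - (1 / 2) * ∑ t, (v t / m t) ^ 2) (hspos : 0 < s) :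
    (Measure.pi fun t : Fin T => gaussianReal 0 ⟨(m t) ^ 2, sq_nonneg (m t)⟩)
        {r : Fin T → ℝ | |∑ t, (2 * r t * v t + (v t) ^ 2) / (2 * (m t) ^ 2)| > ε} ≤
      ENNReal.ofReal (2 * σ / (s * Real.sqrt (2 * Real.pi)) *
        Real.exp (-s ^ 2 / (2 * σ ^ 2))) := by
  have hlaw := map_sum_mul_pi_gaussianReal (fun t ↦ v t / m t ^ 2) 0
    (fun t ↦ ⟨m t ^ 2, sq_nonneg (m t)⟩)
  simp only [Pi.zero_apply, mul_zero, Finset.sum_const_zero] at hlaw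
  have hvar : ((∑ t, ⟨(v t / m t ^ 2) ^ 2, sq_nonneg _⟩ * ⟨m t ^ 2, sq_nonneg (m t)⟩ : ℝ≥0) : ℝ)
      = ∑ t, (v t / m t) ^ 2 := by
    rw [NNReal.coe_sum]
    exact Finset.sum_congr rfl fun t _ ↦ sq_div_sq_mul_sq (v t) (m t)
  have hevent : {r : Fin T → ℝ | |∑ t, (2 * r t * v t + (v t) ^ 2) / (2 * (m t) ^ 2)| > ε} ⊆
      (fun r ↦ ∑ t, v t / m t ^ 2 * r t) ⁻¹' {x | s < |x|} := by
    intro r hr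
    have hnonneg : 0 ≤ 1 / 2 * ∑ t, (v t / m t) ^ 2 := by positivity
    have htri := abs_add_le (∑ t, v t / m t ^ 2 * r t) (1 / 2 * ∑ t, (v t / m t) ^ 2)
    simp only [mem_ofPred_eq, sum_privacy_loss_eq] at hr
    simp only [mem_preimage, mem_ofPred_eq, hs]
    rw [abs_of_nonneg hnonneg] at htri
    linarith
  calc _ ≤ _ := measure_mono hevent
    _ = gaussianReal 0 _ {x | s < |x|} := by
        rw [← Measure.map_apply (by fun_prop) (measurableSet_lt measurable_const (by fun_prop)),
          hlaw]
    _ ≤ _ := gaussianReal_lt_abs_le hspos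
    _ = _ := by rw [hvar, hσ, sq_sqrt (by positivity)]

/-- Privacy-loss tail bound: for independent `r_t ~ N(0, m_t²)` and fixed `v_t`,
with `σ² = Σ_t (v_t/m_t)²` and `s = ε − (1/2)Σ_t (v_t/m_t)² > 0`,
`P(|Σ_t (2r_t v_t + v_t²)/(2m_t²)| > ε) ≤ (2σ/(s√(2π)))·exp(−s²/(2σ²))`. -/
theorem privacy_loss_tail_bound (T : ℕ) (m v : Fin T → ℝ) (hm : ∀ t, 0 < m t)
    (ε σ s : ℝ)
    (hσ : σ = Real.sqrt (∑ t, (v t / m t) ^ 2))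
    (hs : s = ε - (1 / 2) * ∑ t, (v t / m t) ^ 2) (hspos : 0 < s) :
    (Measure.pi fun t : Fin T => gaussianReal 0 ⟨(m t) ^ 2, sq_nonneg (m t)⟩)
        {r : Fin T → ℝ | |∑ t, (2 * r t * v t + (v t) ^ 2) / (2 * (m t) ^ 2)| > ε} ≤
      ENNReal.ofReal (2 * σ / (s * Real.sqrt (2 * Real.pi)) *
        Real.exp (-s ^ 2 / (2 * σ ^ 2))) :=
  privacy_loss_tail_bound_general T m v ε σ s hσ hs hspos
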